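/- arXiv:1907.10332 — 4 statements merged into one kernel-verified Lean document; each statement's English description precedes it below -/
import Mathlib

section
/- Let σ be an n×m real matrix with σᵀσ invertible, let N be an n×m real matrix, let P be an n×n real matrix and let τ ∈ ℝ, and define the m×m matrix C = (σᵀσ)⁻¹σᵀ·P·σ − (σᵀσ)⁻¹σᵀ·N − (τ/2)·I_m. If τ·σσᵀ + N·σᵀ + σ·Nᵀ = P·σσᵀ + σσᵀ·Pᵀ, then σ·(C + Cᵀ)·σᵀ = 0, and hence (since σᵀσ is invertible) C is antisymmetric. -/
open Matrix

/-- The matrix `C = (σᵀσ)⁻¹σᵀ·P·σ − (σᵀσ)⁻¹σᵀ·N − (τ/2)·I` constructed to solve the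
SDE determining equation. -/
noncomputable def Cmat {n m : ℕ} (σ N : Matrix (Fin n) (Fin m) ℝ)
    (P : Matrix (Fin n) (Fin n) ℝ) (τ : ℝ) : Matrix (Fin m) (Fin m) ℝ :=
  (σᵀ * σ)⁻¹ * σᵀ * P * σ - (σᵀ * σ)⁻¹ * σᵀ * N - (τ / 2) • (1 : Matrix (Fin m) (Fin m) ℝ)

/-- If `τ·σσᵀ + N·σᵀ + σ·Nᵀ = P·σσᵀ + σσᵀ·Pᵀ` and `σᵀσ` is invertible, then the matrix
`C = (σᵀσ)⁻¹σᵀPσ − (σᵀσ)⁻¹σᵀN − (τ/2)I` satisfies `σ·(C + Cᵀ)·σᵀ = 0` and hence is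
antisymmetric. -/
theorem Cmat_antisymmetric {n m : ℕ} (σ N : Matrix (Fin n) (Fin m) ℝ)
    (P : Matrix (Fin n) (Fin n) ℝ) (τ : ℝ)
    (hinv : IsUnit (σᵀ * σ))
    (hEq : τ • (σ * σᵀ) + N * σᵀ + σ * Nᵀ = P * (σ * σᵀ) + (σ * σᵀ) * Pᵀ) :
    σ * (Cmat σ N P τ + (Cmat σ N P τ)ᵀ) * σᵀ = 0 ∧
    (Cmat σ N P τ)ᵀ = -Cmat σ N P τ := by
  set G := σᵀ * σ with hG
  have hd : IsUnit G.det := (Matrix.isUnit_iff_isUnit_det G).mp hinv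
  have h1 : G⁻¹ * G = 1 := Matrix.nonsing_inv_mul G hd
  have h2 : G * G⁻¹ = 1 := Matrix.mul_nonsing_inv G hd
  have hGt : Gᵀ = G := by simp [hG, Matrix.transpose_mul]
  have hCt : (Cmat σ N P τ)ᵀ =
      σᵀ * Pᵀ * σ * G⁻¹ - Nᵀ * σ * G⁻¹ - (τ / 2) • (1 : Matrix (Fin m) (Fin m) ℝ) := by
    simp [Cmat, Matrix.transpose_sub, Matrix.transpose_mul, Matrix.transpose_smul,
      Matrix.transpose_nonsing_inv, hGt, Matrix.mul_assoc]
    rfl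
  have key : G * (Cmat σ N P τ + (Cmat σ N P τ)ᵀ) * G =
      σᵀ * ((P * (σ * σᵀ) + (σ * σᵀ) * Pᵀ) - (τ • (σ * σᵀ) + N * σᵀ + σ * Nᵀ)) * σ := by
    rw [hCt]
    simp only [Cmat, Matrix.mul_sub, Matrix.sub_mul, Matrix.mul_add, Matrix.add_mul,
      Matrix.mul_smul, Matrix.smul_mul, Matrix.mul_one, Matrix.one_mul]
    rw [show G * ((σᵀ * σ)⁻¹ * σᵀ * P * σ) = G * (σᵀ * σ)⁻¹ * (σᵀ * P * σ) by
        simp [Matrix.mul_assoc],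
      show G * ((σᵀ * σ)⁻¹ * σᵀ * N) = G * (σᵀ * σ)⁻¹ * (σᵀ * N) by simp [Matrix.mul_assoc],
      ← hG, h2, Matrix.one_mul, Matrix.one_mul]
    rw [show G * (σᵀ * Pᵀ * σ * G⁻¹) * G = G * (σᵀ * Pᵀ * σ) * (G⁻¹ * G) by
        simp [Matrix.mul_assoc],
      show G * (Nᵀ * σ * G⁻¹) * G = G * (Nᵀ * σ) * (G⁻¹ * G) by simp [Matrix.mul_assoc],
      h1, Matrix.mul_one, Matrix.mul_one]
    simp only [hG, Matrix.mul_assoc]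
    module
  rw [hEq, sub_self, Matrix.mul_zero, Matrix.zero_mul] at key
  have hS : Cmat σ N P τ + (Cmat σ N P τ)ᵀ = 0 := by
    have := congrArg (fun X => G⁻¹ * X * G⁻¹) key
    simpa [Matrix.mul_assoc, h2, Matrix.nonsing_inv_mul_cancel_left G _ hd,
      Matrix.mul_nonsing_inv_cancel_right G _ hd, eq_comm] using this.symm
  constructor
  · rw [hS, Matrix.mul_zero, Matrix.zero_mul]
  · linear_combination (norm := noncomm_ring) hS
end

section
/- For a ≠ 0, b ∈ ℝ, the functions f(x,z) = (c₃/(2a))e^{−2az}(ax+b) + (c₄/(2a))e^{2az}(ax+b) + (c₂/2)e^{−az} + c₅e^{az}, m(x,z) = −(c₃/(2a))e^{−2az} + (c₄/(2a))e^{2az} + c₆, τ(x,z) = c₃e^{−2az} + c₄e^{2az}, H₁(x,z) = c₂ a e^{−az} + 2c₃(ax+b)e^{−2az} satisfy the determining equations for symmetries of the Ornstein–Uhlenbeck SDE: (1/2)f_{xx} + (ax+b)f_x + f_z = a f + τ(ax+b) − H₁, (1/2)m_{xx} + (ax+b)m_x + m_z = τ, f_x = τ/2, m_x = 0, for all constants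 c₂,…,c₆ ∈ ℝ. -/
/-!
For fixed `z`, `f` is affine in `x` with slope `τ / 2` and `m` is constant in `x`, so both
second `x`-derivatives vanish and the determining equations reduce to the `z`-derivatives
`f_z = a f + (a x + b) τ / 2 - H₁` and `m_z = τ`, which are read off from `(e^{k z})' = k e^{k z}`.
-/

lemma hasDerivAt_exp_const_mul (k z : ℝ) :
    HasDerivAt (fun t => Real.exp (k * t)) (k * Real.exp (k * z)) z := by
  simpa [mul_comm] using ((hasDerivAt_id z).const_mul k).exp

lemma deriv_deriv_eq_zero_of_forall_hasDerivAt {𝕜 F : Type*} [NontriviallyNormedField 𝕜]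
    [NormedAddCommGroup F] [NormedSpace 𝕜 F] {g : 𝕜 → F} {c : F}
    (hg : ∀ s, HasDerivAt g c s) (x : 𝕜) : deriv (deriv g) x = 0 := by
  rw [funext fun s => (hg s).deriv, deriv_const]

/-- The functions `f, m, τ, H₁` of the paper satisfy the determining equations for
symmetries of the Ornstein–Uhlenbeck SDE. -/
theorem ou_doob_determining (a b c2 c3 c4 c5 c6 : ℝ) (ha : a ≠ 0) :
    let f : ℝ → ℝ → ℝ := fun x z =>
      c3 / (2 * a) * Real.exp (-2 * a * z) * (a * x + b)
        + c4 / (2 * a) * Real.exp (2 * a * z) * (a * x + b)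
        + c2 / 2 * Real.exp (-a * z) + c5 * Real.exp (a * z)
    let m : ℝ → ℝ → ℝ := fun _ z =>
      -(c3 / (2 * a)) * Real.exp (-2 * a * z) + c4 / (2 * a) * Real.exp (2 * a * z) + c6
    let τ : ℝ → ℝ → ℝ := fun _ z =>
      c3 * Real.exp (-2 * a * z) + c4 * Real.exp (2 * a * z)
    let H1 : ℝ → ℝ → ℝ := fun x z =>
      c2 * a * Real.exp (-a * z) + 2 * c3 * (a * x + b) * Real.exp (-2 * a * z)
    ∀ x z : ℝ,
      (1 / 2) * deriv (fun t => deriv (fun s => f s z) t) x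
          + (a * x + b) * deriv (fun s => f s z) x + deriv (fun t => f x t) z
        = a * f x z + τ x z * (a * x + b) - H1 x z ∧
      (1 / 2) * deriv (fun t => deriv (fun s => m s z) t) x
          + (a * x + b) * deriv (fun s => m s z) x + deriv (fun t => m x t) z
        = τ x z ∧
      deriv (fun s => f s z) x = τ x z / 2 ∧
      deriv (fun s => m s z) x = 0 := by
  intro f m τ H1 x z
  have hfx : ∀ s, HasDerivAt (fun s => f s z) (τ x z / 2) s := fun s => by
    have hlin : HasDerivAt (fun s => a * s + b) a s := by
      simpa using ((hasDerivAt_id s).const_mul a).add_const b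
    refine ((((hlin.const_mul (c3 / (2 * a) * Real.exp (-2 * a * z))).add
      (hlin.const_mul (c4 / (2 * a) * Real.exp (2 * a * z)))).add_const _).add_const _).congr_deriv ?_
    simp only [τ]
    field_simp
  have hmx : ∀ s, HasDerivAt (fun s => m s z) 0 s := fun s => hasDerivAt_const s _
  have hfz : HasDerivAt (fun t => f x t) (a * f x z + τ x z / 2 * (a * x + b) - H1 x z) z := by
    refine (((((hasDerivAt_exp_const_mul (-2 * a) z).const_mul (c3 / (2 * a))).mul_const
        (a * x + b)).add
      (((hasDerivAt_exp_const_mul (2 * a) z).const_mul (c4 / (2 * a))).mul_const (a * x + b))).add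
      ((hasDerivAt_exp_const_mul (-a) z).const_mul (c2 / 2))).add
      ((hasDerivAt_exp_const_mul a z).const_mul c5) |>.congr_deriv ?_
    simp only [f, τ, H1]
    field_simp
    ring
  have hmz : HasDerivAt (fun t => m x t) (τ x z) z := by
    refine ((((hasDerivAt_exp_const_mul (-2 * a) z).const_mul (-(c3 / (2 * a)))).add
      ((hasDerivAt_exp_const_mul (2 * a) z).const_mul (c4 / (2 * a)))).add_const c6).congr_deriv ?_
    simp only [τ]
    field_simp
  refine ⟨?_, ?_, (hfx x).deriv, (hmx x).deriv⟩
  · rw [deriv_deriv_eq_zero_of_forall_hasDerivAt hfx, (hfx x).deriv, hfz.deriv]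
    ring
  · rw [deriv_deriv_eq_zero_of_forall_hasDerivAt hmx, (hmx x).deriv, hmz.deriv]
    ring
end

section
/- For a ≠ 0 and b ∈ ℝ, the infinitesimal transformation with f(x,z) = x/(2a) − b/(2a²) + e^{az}, m(x,z) = z/a, τ(x,z) = 1/a, H₁(x,z) = x satisfies the (Girsanov) determining equations of the Ornstein–Uhlenbeck SDE: (1/2)f_{xx} + (ax+b)f_x + f_z = a f + τ(ax+b) − H₁, (1/2)m_{xx} + (ax+b)m_x + m_z = τ, f_x = τ/2, m_x = 0; moreover H₁ = ∂_x k with k = x²/2, but L(k) = (1/2)k_{xx} + (ax+b)k_x + k_z = 1/2 + (ax+b)x ≢ 0, so this symmetry is not of Doob type. -/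
open Real

theorem deriv_exp_const_mul (c x : ℝ) : deriv (fun t => exp (c * t)) x = c * exp (c * x) := by
  simpa using congrFun (iteratedDeriv_exp_const_mul 1 c) x

theorem ou_generator_half_sq (a b x : ℝ) :
    (1 / 2) * deriv (fun t => deriv (fun s : ℝ => s ^ 2 / 2) t) x
        + (a * x + b) * deriv (fun s : ℝ => s ^ 2 / 2) x
      = 1 / 2 + (a * x + b) * x := by
  simp

/-- The infinitesimal transformation with `f(x,z) = x/(2a) − b/(2a²) + e^{az}`,
`m(x,z) = z/a`, `τ = 1/a`, `H₁ = x` satisfies the (Girsanov) determining equations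
of the Ornstein–Uhlenbeck SDE; moreover `H₁ = ∂ₓk` with `k = x²/2`, but
`L(k) = 1/2 + (ax+b)x` does not vanish identically, so this symmetry is not of
Doob type. -/
theorem ou_non_doob_symmetry (a b : ℝ) (ha : a ≠ 0) :
    let f : ℝ → ℝ → ℝ := fun x z => x / (2 * a) - b / (2 * a ^ 2) + Real.exp (a * z)
    let m : ℝ → ℝ → ℝ := fun _ z => z / a
    let τ : ℝ → ℝ → ℝ := fun _ _ => 1 / a
    let H1 : ℝ → ℝ → ℝ := fun x _ => x
    let k : ℝ → ℝ := fun x => x ^ 2 / 2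
    (∀ x z : ℝ,
      (1 / 2) * deriv (fun t => deriv (fun s => f s z) t) x
          + (a * x + b) * deriv (fun s => f s z) x + deriv (fun t => f x t) z
        = a * f x z + τ x z * (a * x + b) - H1 x z ∧
      (1 / 2) * deriv (fun t => deriv (fun s => m s z) t) x
          + (a * x + b) * deriv (fun s => m s z) x + deriv (fun t => m x t) z
        = τ x z ∧
      deriv (fun s => f s z) x = τ x z / 2 ∧
      deriv (fun s => m s z) x = 0) ∧
    (∀ x z : ℝ, deriv k x = H1 x z) ∧
    ¬(∀ x : ℝ,
        (1 / 2) * deriv (fun t => deriv k t) x + (a * x + b) * deriv k x = 0) := by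
  intro f m τ H1 k
  have hfx : ∀ z, deriv (fun s => f s z) = fun _ => 1 / (2 * a) := fun z => by
    funext x
    simp only [f, deriv_add_const', deriv_sub_const, deriv_div_const, deriv_id'']
  have hfz : ∀ x z, deriv (fun t => f x t) z = a * exp (a * z) := fun x z => by
    simp only [f, deriv_const_add', deriv_exp_const_mul]
  refine ⟨fun x z => ⟨?_, by simp [m, τ], by simp only [hfx, τ]; ring, by simp [m]⟩,
    fun x z => by simp [k, H1], fun hL => ?_⟩
  · simp only [hfx, hfz, deriv_const', f, τ, H1]
    field_simp
    ring
  · have h0 := hL 0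
    rw [ou_generator_half_sq] at h0
    norm_num at h0
end

section
/- For a ≠ 0, b, σ₀ ∈ ℝ and x > 0, the functions f(x,z) = (1/2)c₁σ₀²xe^{−az} + c₃xe^{az}, m(x,z) = −(1/(2a))c₁σ₀²e^{−az} + (c₃/a)e^{az} + c₄, τ(x,z) = (1/2)c₁σ₀²e^{−az} + c₃e^{az}, k(x,z) = c₁(ax+b)e^{−az} + c₂, H₁ = σ₀√x·k_x, satisfy the Doob determining equations of the CIR model: (1/2)σ₀²x k_{xx} + (ax+b)k_x + k_z = 0, (1/2)σ₀²x f_{xx} + (ax+b)f_x + f_z = af + (ax+b)τ − σ₀²x k_x, (1/2)σ₀²x m_{xx} + (ax+b)m_x + m_z = τ, σ₀√x f_x − (σ₀/(2√x))f = (σ₀√x/2)τ, σ₀√x m_x = 0, for all constants c₁,…,c₄. -/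
/-!
Each of `k`, `f`, `m` is affine in `x` with coefficients in the span of `1, e^{-az}, e^{az}`, so
all second `x`-derivatives vanish and every equation becomes an identity between such
exponential polynomials; the equation involving `√x` only needs `x / √x = √x`.
-/

open Real

lemma deriv_exp_neg_add_exp (A B C a z : ℝ) :
    deriv (fun t => A * exp (-a * t) + B * exp (a * t) + C) z
      = a * (B * exp (a * z) - A * exp (-a * z)) := by
  have hexp (c : ℝ) : HasDerivAt (fun t => exp (c * t)) (c * exp (c * z)) z := by
    simpa [mul_comm] using ((hasDerivAt_id z).const_mul c).exp
  exact ((((hexp (-a)).const_mul A).add ((hexp a).const_mul B)).add_const C).deriv.trans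
    (by ring)

/-- The functions `f, m, τ, k` satisfy the Doob determining equations of the CIR
model, with `H₁ = σ₀√x·k_x`, for all `x > 0`. -/
theorem cir_doob_determining (a b c1 c2 c3 c4 σ0 : ℝ) (ha : a ≠ 0) :
    let f : ℝ → ℝ → ℝ := fun x z =>
      (1 / 2) * c1 * σ0 ^ 2 * x * Real.exp (-a * z) + c3 * x * Real.exp (a * z)
    let m : ℝ → ℝ → ℝ := fun _ z =>
      -(1 / (2 * a)) * c1 * σ0 ^ 2 * Real.exp (-a * z) + c3 / a * Real.exp (a * z) + c4
    let τ : ℝ → ℝ → ℝ := fun _ z =>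
      (1 / 2) * c1 * σ0 ^ 2 * Real.exp (-a * z) + c3 * Real.exp (a * z)
    let k : ℝ → ℝ → ℝ := fun x z => c1 * (a * x + b) * Real.exp (-a * z) + c2
    ∀ x z : ℝ, 0 < x →
      (1 / 2) * σ0 ^ 2 * x * deriv (fun t => deriv (fun s => k s z) t) x
          + (a * x + b) * deriv (fun s => k s z) x + deriv (fun t => k x t) z = 0 ∧
      (1 / 2) * σ0 ^ 2 * x * deriv (fun t => deriv (fun s => f s z) t) x
          + (a * x + b) * deriv (fun s => f s z) x + deriv (fun t => f x t) z
        = a * f x z + (a * x + b) * τ x z - σ0 ^ 2 * x * deriv (fun s => k s z) x ∧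
      (1 / 2) * σ0 ^ 2 * x * deriv (fun t => deriv (fun s => m s z) t) x
          + (a * x + b) * deriv (fun s => m s z) x + deriv (fun t => m x t) z
        = τ x z ∧
      σ0 * Real.sqrt x * deriv (fun s => f s z) x
          - σ0 / (2 * Real.sqrt x) * f x z
        = σ0 * Real.sqrt x / 2 * τ x z ∧
      σ0 * Real.sqrt x * deriv (fun s => m s z) x = 0 := by
  intro f m τ k x z _
  have hf : f x z = x * τ x z := by simp only [f, τ]; ring
  rw [hf]
  have hk_x : (fun s => k s z)
      = fun s => c1 * a * exp (-a * z) * s + (c1 * b * exp (-a * z) + c2) := by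
    funext s; simp only [k]; ring
  have hf_x : (fun s => f s z) = fun s => τ x z * s + 0 := by
    funext s; simp only [f, τ]; ring
  have hm_x : (fun s => m s z) = fun s => 0 * s + m x z := by
    funext s; simp only [m, zero_mul, zero_add]
  have hk_z : (fun t => k x t)
      = fun t => c1 * (a * x + b) * exp (-a * t) + 0 * exp (a * t) + c2 := by
    funext t; simp only [k]; ring
  have hf_z : (fun t => f x t)
      = fun t => 1 / 2 * c1 * σ0 ^ 2 * x * exp (-a * t) + c3 * x * exp (a * t) + 0 := by
    funext t; simp only [f]; ring
  have hm_z : (fun t => m x t)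
      = fun t => -(1 / (2 * a)) * c1 * σ0 ^ 2 * exp (-a * t) + c3 / a * exp (a * t) + c4 := rfl
  simp only [hk_x, hf_x, hm_x, hk_z, hf_z, hm_z, deriv_add_const', deriv_const_mul_id', deriv_const,
    deriv_exp_neg_add_exp]
  refine ⟨by ring, by simp only [τ]; ring, by simp only [τ]; field_simp; ring, ?_, by ring⟩
  calc σ0 * √x * τ x z - σ0 / (2 * √x) * (x * τ x z)
      = σ0 * √x * τ x z - σ0 / 2 * (x / √x) * τ x z := by ring
    _ = σ0 * √x / 2 * τ x z := by rw [div_sqrt]; ring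
end
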